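/- arXiv:2310.19979 — 5 statements merged into one kernel-verified Lean document; each statement's English description precedes it below -/
import Mathlib

section
/- For all natural numbers n ≥ 2: if n is even then F_{2n-1} - 1 = F_n · (F_{n-2} + F_n), and if n is odd then F_{2n-1} - 1 = F_{n-1} · (F_{n-1} + F_{n+1}). -/
lemma cassini (k : ℕ) : ((Nat.fib (k+1) : ℤ))^2 - Nat.fib k * Nat.fib (k+2) = (-1)^k := by
  induction k with
  | zero => simp
  | succ k ih =>
    have h1 : (Nat.fib (k+2) : ℤ) = Nat.fib k + Nat.fib (k+1) := by
      rw [Nat.fib_add_two]; push_cast; ring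
    have h2 : (Nat.fib (k+3) : ℤ) = Nat.fib (k+1) + Nat.fib (k+2) := by
      rw [show k+3 = (k+1)+2 from rfl, Nat.fib_add_two]; push_cast; ring
    have hp : ((-1:ℤ))^(k+1) = -(-1)^k := by ring
    rw [h1] at ih
    rw [h2, h1, hp]
    linear_combination -ih

theorem fib_two_mul_sub_one (n : ℕ) (hn : 2 ≤ n) :
    (Even n → (Nat.fib (2 * n - 1) : ℤ) - 1 = Nat.fib n * (Nat.fib (n - 2) + Nat.fib n)) ∧
    (Odd n → (Nat.fib (2 * n - 1) : ℤ) - 1 = Nat.fib (n - 1) * (Nat.fib (n - 1) + Nat.fib (n + 1))) := by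
  obtain ⟨m, rfl⟩ : ∃ m, n = m + 2 := ⟨n - 2, by omega⟩
  have hfib : Nat.fib (2 * (m + 2) - 1) = Nat.fib (m+2)^2 + Nat.fib (m+1)^2 := by
    rw [show 2*(m+2)-1 = 2*(m+1)+1 by omega, Nat.fib_two_mul_add_one]
  have c1 := cassini m
  have c2 := cassini (m+1)
  constructor
  · intro he
    have hm : Even m := by simpa [Nat.even_add] using he
    rw [hm.neg_one_pow] at c1
    rw [hfib]
    push_cast
    linear_combination c1
  · intro ho
    obtain ⟨j, hj⟩ := ho
    have hm : Even (m+1) := ⟨j, by omega⟩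
    rw [show m+1+1 = m+2 from rfl, show m+1+2 = m+3 from rfl, hm.neg_one_pow] at c2
    have h3 : Nat.fib (m+3) = Nat.fib (m+1) + Nat.fib (m+2) := by
      rw [show m+3 = (m+1)+2 from rfl, Nat.fib_add_two]
    rw [h3] at c2
    rw [hfib, show m+2-1 = m+1 from rfl, show m+2+1 = m+3 from rfl]
    push_cast [h3]
    push_cast at c2
    linear_combination c2
end

section
/- For all natural numbers n ≥ 1, S_n · (S_n + S_{n-1}) = Σ_{i=0}^{2n} S_i, in ℤ[x]. -/
/-- Chebyshev polynomials of the second kind in ℤ[x]. -/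
noncomputable def chebS : ℕ → Polynomial ℤ
  | 0 => 1
  | 1 => Polynomial.X
  | (n+2) => Polynomial.X * chebS (n+1) - chebS n

/-!
Writing `f n = S n * (S n + S (n - 1))`, the addition formula
`S (m + n) = S m * S n - S (m - 1) * S (n - 1)` gives `S (2n+1) = S (n+1) S n - S n S (n-1)` and
`S (2n+2) = S (n+1)² - S n²`, so `f (n + 1) - f n = S (2n+1) + S (2n+2)` and the sum telescopes.
Here `S` is Mathlib's `Polynomial.Chebyshev.S`, which agrees with `chebS` on `ℕ`.
-/

open Polynomial Polynomial.Chebyshev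

namespace Polynomial.Chebyshev

variable (R : Type*) [CommRing R]

theorem S_add (m n : ℤ) : S R (m + n) = S R m * S R n - S R (m - 1) * S R (n - 1) := by
  induction n using Polynomial.Chebyshev.induct with
  | zero => simp
  | one => rw [S_add_one, S_one, sub_self, S_zero]; ring
  | add_two n ih1 ih0 =>
    have hm : S R (m + (n + 2)) = X * S R (m + (n + 1)) - S R (m + n) := by
      rw [← add_assoc, S_add_two, add_assoc]
    rw [add_sub_cancel_right] at ih1
    rw [hm, ih1, ih0, show (n : ℤ) + 2 - 1 = n + 1 by ring, S_add_two, S_add_one R n]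
    ring
  | neg_add_one n ih0 ih1 =>
    have hm : S R (m + (-n - 1)) = X * S R (m + -n) - S R (m + (-n + 1)) := by
      rw [show m + (-n - 1) = m + -n - 1 by ring, S_sub_one, add_assoc]
    rw [add_sub_cancel_right] at ih1
    rw [hm, ih1, ih0, show -(n : ℤ) - 1 - 1 = -n - 2 by ring, S_sub_two R (-n), S_sub_one R (-n)]
    ring

theorem S_mul_S_add_S_sub_one_eq_sum (n : ℕ) :
    S R n * (S R n + S R (n - 1)) = ∑ i ∈ Finset.range (2 * n + 1), S R i := by
  induction n with
  | zero => simp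
  | succ n ih =>
    have hodd := S_add R (n + 1) n
    have heven := S_add R (n + 1) (n + 1)
    rw [show 2 * (n + 1) + 1 = 2 * n + 1 + 1 + 1 by ring, Finset.sum_range_succ,
      Finset.sum_range_succ, ← ih]
    push_cast at hodd heven ⊢
    rw [show (n : ℤ) + 1 + n = 2 * n + 1 by ring] at hodd
    rw [show (n : ℤ) + 1 + (n + 1) = 2 * n + 2 by ring] at heven
    rw [hodd, heven, add_sub_cancel_right]
    ring

end Polynomial.Chebyshev

theorem chebS_eq_S : ∀ n : ℕ, chebS n = S ℤ n
  | 0 => by simp [chebS]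
  | 1 => by simp [chebS]
  | n + 2 => by
    rw [chebS, chebS_eq_S (n + 1), chebS_eq_S n]
    push_cast
    exact (S_add_two ℤ n).symm

theorem chebS_mul_add_pred (n : ℕ) (hn : 1 ≤ n) :
    chebS n * (chebS n + chebS (n - 1)) = ∑ i ∈ Finset.range (2 * n + 1), chebS i := by
  simp only [chebS_eq_S, Nat.cast_sub hn, Nat.cast_one]
  exact S_mul_S_add_S_sub_one_eq_sum ℤ n
end

section
/- For all natural numbers n, S_n · (S_n + S_{n+1}) = Σ_{i=0}^{2n+1} S_i, in ℤ[x]. -/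
/-! By the product formula `S_{m+1} S_{n+1} - S_m S_n = S_{m+n+2}`, the two terms `S_{2n+2}` and
`S_{2n+3}` that the sum gains from `n` to `n + 1` are `S_{n+1}² - S_n²` and
`S_{n+1} S_{n+2} - S_n S_{n+1}`, which add up to the increment of the left-hand side. -/

open Polynomial

@[simp]
theorem chebS_zero : chebS 0 = 1 := rfl

@[simp]
theorem chebS_one : chebS 1 = X := rfl

theorem chebS_add_two (n : ℕ) : chebS (n + 2) = X * chebS (n + 1) - chebS n := rfl

theorem chebS_succ_mul_chebS_succ_sub_mul (m n : ℕ) :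
    chebS (m + 1) * chebS (n + 1) - chebS m * chebS n = chebS (m + n + 2) := by
  induction n generalizing m with
  | zero => simp [chebS_add_two, mul_comm]
  | succ n ih =>
    calc chebS (m + 1) * chebS (n + 2) - chebS m * chebS (n + 1)
        = chebS (m + 2) * chebS (n + 1) - chebS (m + 1) * chebS n := by
          rw [chebS_add_two, chebS_add_two]; ring
      _ = chebS (m + n + 3) := by rw [ih (m + 1)]; ring_nf

theorem chebS_mul_add_succ (n : ℕ) :
    chebS n * (chebS n + chebS (n + 1)) = ∑ i ∈ Finset.range (2 * n + 2), chebS i := by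
  induction n with
  | zero => simp [Finset.sum_range_succ]
  | succ n ih =>
    have h_even : chebS (2 * n + 2) = chebS (n + 1) * chebS (n + 1) - chebS n * chebS n := by
      rw [chebS_succ_mul_chebS_succ_sub_mul]; ring_nf
    have h_odd : chebS (2 * n + 3) =
        chebS (n + 2) * chebS (n + 1) - chebS (n + 1) * chebS n := by
      rw [chebS_succ_mul_chebS_succ_sub_mul]; ring_nf
    rw [show 2 * (n + 1) + 2 = 2 * n + 2 + 1 + 1 by ring, Finset.sum_range_succ,
      Finset.sum_range_succ, ← ih, h_even, h_odd]
    ring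
end

section
/- Define sequences (P_n), (Q_n) in ℤ×ℤ (coordinates in generators x, y) by P_0 = (0,0), Q_0 = (0,0), and the recursions P_{n+1} = P_n + Q_n + (1,0) and Q_{n+1} = P_{n+1} + Q_n + (0,1). Then for all n ≥ 1, the matrix with rows P_n and Q_n equals [[F_{2n}, F_{2n-1} - 1], [F_{2n+1} - 1, F_{2n}]], where F is the Fibonacci sequence. -/
theorem fox_matrix_fib (P Q : ℕ → ℤ × ℤ)
    (hP0 : P 0 = (0, 0)) (hQ0 : Q 0 = (0, 0))
    (hP : ∀ n, P (n + 1) = P n + Q n + (1, 0))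
    (hQ : ∀ n, Q (n + 1) = P (n + 1) + Q n + (0, 1)) :
    ∀ n, 1 ≤ n →
      P n = ((Nat.fib (2 * n) : ℤ), (Nat.fib (2 * n - 1) : ℤ) - 1) ∧
      Q n = ((Nat.fib (2 * n + 1) : ℤ) - 1, (Nat.fib (2 * n) : ℤ)) := by
  intro n
  induction n with
  | zero => omega
  | succ m ih =>
    intro _
    rcases Nat.eq_zero_or_pos m with hm | hm
    · subst hm
      constructor <;> simp [hP, hQ, hP0, hQ0, Prod.ext_iff] <;> decide
    · obtain ⟨hPm, hQm⟩ := ih hm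
      have h1 : 2 * (m + 1) - 1 = 2 * m + 1 := by omega
      have h2 : 2 * m - 1 + 1 = 2 * m := by omega
      have hf : Nat.fib (2 * m + 1) = Nat.fib (2 * m - 1) + Nat.fib (2 * m) := by
        rw [← h2, Nat.fib_add_two]; simp
      constructor <;>
        simp [hP, hQ, hPm, hQm, h1, Prod.ext_iff, Nat.fib_add_two, mul_add, hf] <;>
        push_cast <;> (try ring) <;> trivial
end

section
/- For natural numbers n ≥ 1 and k with n odd, define the matrix A_{2n-2k} = [[F_{2n-2k} + F_{2k}, F_{2n-2k-1} - F_{2k+1}], [F_{2n-2k+1} - F_{2k-1}, F_{2n-2k} + F_{2k}]] over ℤ. Then for each k with 0 ≤ k ≤ n, det(A_{2n-2k}) = det(A_{2n}), i.e., the determinant (F_{2n-2k} + F_{2k})² - (F_{2n-2k-1} - F_{2k+1})(F_{2n-2k+1} - F_{2k-1}) is independent of k. -/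
lemma det_step (F : ℤ → ℤ) (hF : ∀ m : ℤ, F (m + 2) = F (m + 1) + F m) (a b : ℤ) :
    (F (a - 2) + F (b + 2)) ^ 2 - (F (a - 3) - F (b + 3)) * (F (a - 1) - F (b + 1)) =
      (F a + F b) ^ 2 - (F (a - 1) - F (b + 1)) * (F (a + 1) - F (b - 1)) := by
  have e1 : F (a - 1) = F (a - 2) + F (a - 3) := by
    have := hF (a - 3); rw [show a - 3 + 2 = a - 1 by ring, show a - 3 + 1 = a - 2 by ring] at this
    linarith
  have e2 : F a = F (a - 1) + F (a - 2) := by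
    have := hF (a - 2); rw [show a - 2 + 2 = a by ring, show a - 2 + 1 = a - 1 by ring] at this
    linarith
  have e3 : F (a + 1) = F a + F (a - 1) := by
    have := hF (a - 1); rw [show a - 1 + 2 = a + 1 by ring, show a - 1 + 1 = a by ring] at this
    linarith
  have e4 : F (b + 2) = F (b + 1) + F b := hF b
  have e5 : F (b + 3) = F (b + 2) + F (b + 1) := by
    have := hF (b + 1); rw [show b + 1 + 2 = b + 3 by ring, show b + 1 + 1 = b + 2 by ring] at this
    linarith
  have e6 : F (b - 1) = F (b + 1) - F b := by
    have := hF (b - 1); rw [show b - 1 + 2 = b + 1 by ring, show b - 1 + 1 = b by ring] at this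
    linarith
  rw [e3, e2, e1, e4, e5, e6, e4]
  ring

theorem det_invariant (F : ℤ → ℤ)
    (hF0 : F 0 = 0) (hF1 : F 1 = 1) (hF : ∀ m : ℤ, F (m + 2) = F (m + 1) + F m)
    (n : ℕ) (hn : 1 ≤ n) (hodd : Odd n) :
    ∀ k : ℕ, k ≤ n →
      (F (2 * n - 2 * k) + F (2 * k)) ^ 2 -
          (F (2 * n - 2 * k - 1) - F (2 * k + 1)) * (F (2 * n - 2 * k + 1) - F (2 * k - 1)) =
        (F (2 * n) + F 0) ^ 2 - (F (2 * n - 1) - F 1) * (F (2 * n + 1) - F (-1)) := by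
  intro k hk
  induction k with
  | zero => norm_num
  | succ k ih =>
      have hk' : k ≤ n := Nat.le_of_succ_le hk
      have := det_step F hF (2 * (n : ℤ) - 2 * k) (2 * k)
      push_cast
      rw [show 2 * (n : ℤ) - 2 * (k + 1) = 2 * n - 2 * k - 2 by ring,
        show 2 * ((k : ℤ) + 1) = 2 * k + 2 by ring,
        show 2 * (n : ℤ) - 2 * k - 2 - 1 = 2 * n - 2 * k - 3 by ring,
        show 2 * (k : ℤ) + 2 + 1 = 2 * k + 3 by ring,
        show 2 * (n : ℤ) - 2 * k - 2 + 1 = 2 * n - 2 * k - 1 by ring,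
        show 2 * (k : ℤ) + 2 - 1 = 2 * k + 1 by ring, this]
      exact ih hk'
end
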